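/- arXiv:2504.03339 — 3 statements merged into one kernel-verified Lean document; each statement's English description precedes it below -/
import Mathlib

section
/- Let D ⊂ ℝ^{n−k} be measurable with λₖ(C) > 0 for a measurable C ⊂ ℝᵏ, both of finite measure. If limsup_{r→0+} (1/r) λ_{n−k}((D ⊕ rB^{n−k}) \ D) = ∞, then the set A = C × D ⊂ ℝⁿ satisfies limsup_{r→0+} (1/r) λₙ((A ⊕ rBⁿ) \ A) = ∞. -/
/-! Thickening `C × D` by a set containing `{0} × T` adds at least `C × ((D + T) \ D)`, so
`λₙ((A ⊕ rBⁿ) \ A) ≥ λₖ(C) · λₙ₋ₖ((D ⊕ rBⁿ⁻ᵏ) \ D)`, and a positive factor cannot tame an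
infinite `limsup`. -/

open Pointwise MeasureTheory Filter

/-- The closed Euclidean unit ball of the product `ℝᵏ × ℝᵐ` (with the Euclidean norm,
i.e. `‖p.1‖² + ‖p.2‖² ≤ 1`). -/
def euclideanProdBall (k m : ℕ) :
    Set (EuclideanSpace ℝ (Fin k) × EuclideanSpace ℝ (Fin m)) :=
  {p | ‖p.1‖ ^ 2 + ‖p.2‖ ^ 2 ≤ 1}

theorem Set.prod_add_diff_subset {α β : Type*} [AddZeroClass α] [Add β]
    {C : Set α} {D T : Set β} {S : Set (α × β)} (hTS : {0} ×ˢ T ⊆ S) :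
    C ×ˢ ((D + T) \ D) ⊆ (C ×ˢ D + S) \ C ×ˢ D := by
  rintro ⟨x, y⟩ ⟨hx, hyT, hyD⟩
  refine ⟨?_, fun h => hyD h.2⟩
  have hprod : C ×ˢ (D + T) = C ×ˢ D + {0} ×ˢ T := by
    rw [Set.prod_add_prod_comm, Set.singleton_zero, add_zero]
  exact Set.add_subset_add_left hTS (hprod ▸ Set.mk_mem_prod hx hyT)

theorem zero_prod_smul_closedBall_subset_smul_euclideanProdBall (k m : ℕ) (r : ℝ) :
    {0} ×ˢ (r • Metric.closedBall (0 : EuclideanSpace ℝ (Fin m)) 1) ⊆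
      r • euclideanProdBall k m := by
  have hball : {0} ×ˢ Metric.closedBall (0 : EuclideanSpace ℝ (Fin m)) 1 ⊆
      euclideanProdBall k m := by
    rintro ⟨x, y⟩ ⟨rfl, hy⟩
    have hy1 : ‖y‖ ≤ 1 := by simpa using hy
    simp only [euclideanProdBall, Set.mem_ofPred_eq, norm_zero]
    nlinarith [norm_nonneg y]
  calc {0} ×ˢ (r • Metric.closedBall (0 : EuclideanSpace ℝ (Fin m)) 1)
      = r • ({0} ×ˢ Metric.closedBall (0 : EuclideanSpace ℝ (Fin m)) 1) := by
        rw [Set.smul_set_prod, Set.smul_set_singleton, smul_zero]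
    _ ⊆ r • euclideanProdBall k m := Set.smul_set_mono hball

theorem ENNReal.limsup_const_mul_eq_top {α : Type*} {f : Filter α} {u : α → ENNReal}
    {c : ENNReal} (hc : c ≠ 0) (hu : f.limsup u = ⊤) :
    f.limsup (fun x => c * u x) = ⊤ := by
  -- `c` may be `⊤`; the finite `min c 1` can be pulled out of the `limsup`.
  have hc' : min c 1 ≠ 0 := by simp [hc]
  have hc'_top : min c 1 ≠ ⊤ := (min_le_right c 1).trans_lt ENNReal.one_lt_top |>.ne
  refine top_unique ?_
  calc ⊤ = min c 1 * f.limsup u := by rw [hu, ENNReal.mul_top hc']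
    _ = f.limsup (fun x => min c 1 * u x) := (ENNReal.limsup_const_mul_of_ne_top hc'_top).symm
    _ ≤ f.limsup (fun x => c * u x) :=
        limsup_le_limsup (Eventually.of_forall fun x => mul_le_mul_left (min_le_left c 1) _)

theorem stmt8_general {k m : ℕ} (C : Set (EuclideanSpace ℝ (Fin k)))
    (D : Set (EuclideanSpace ℝ (Fin m)))
    (hC0 : 0 < volume C)
    (hlimsup : limsup
      (fun r : ℝ =>
        volume ((D + r • Metric.closedBall (0 : EuclideanSpace ℝ (Fin m)) 1) \ D) /
          ENNReal.ofReal r)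
      (nhdsWithin 0 (Set.Ioi 0)) = ⊤) :
    limsup
      (fun r : ℝ =>
        volume (((C ×ˢ D) + r • euclideanProdBall k m) \ (C ×ˢ D)) / ENNReal.ofReal r)
      (nhdsWithin 0 (Set.Ioi 0)) = ⊤ := by
  have hvolume (r : ℝ) :
      volume C * volume ((D + r • Metric.closedBall (0 : EuclideanSpace ℝ (Fin m)) 1) \ D) ≤
        volume (((C ×ˢ D) + r • euclideanProdBall k m) \ (C ×ˢ D)) := by
    rw [Measure.volume_eq_prod, ← Measure.prod_prod]
    exact measure_mono
      (Set.prod_add_diff_subset (zero_prod_smul_closedBall_subset_smul_euclideanProdBall k m r))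
  refine top_unique ?_
  calc ⊤ = limsup (fun r : ℝ => volume C *
        (volume ((D + r • Metric.closedBall (0 : EuclideanSpace ℝ (Fin m)) 1) \ D) /
          ENNReal.ofReal r)) (nhdsWithin 0 (Set.Ioi 0)) :=
        (ENNReal.limsup_const_mul_eq_top hC0.ne' hlimsup).symm
    _ ≤ _ := limsup_le_limsup (Eventually.of_forall fun r =>
        (mul_div_assoc ..).symm.trans_le (ENNReal.div_le_div_right (hvolume r) _))

theorem stmt8 {k m : ℕ} (C : Set (EuclideanSpace ℝ (Fin k)))
    (D : Set (EuclideanSpace ℝ (Fin m)))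
    (hC : MeasurableSet C) (hD : MeasurableSet D)
    (hC0 : 0 < volume C) (hCfin : volume C < ⊤) (hDfin : volume D < ⊤)
    (hlimsup : limsup
      (fun r : ℝ =>
        volume ((D + r • Metric.closedBall (0 : EuclideanSpace ℝ (Fin m)) 1) \ D) /
          ENNReal.ofReal r)
      (nhdsWithin 0 (Set.Ioi 0)) = ⊤) :
    limsup
      (fun r : ℝ =>
        volume (((C ×ˢ D) + r • euclideanProdBall k m) \ (C ×ˢ D)) / ENNReal.ofReal r)
      (nhdsWithin 0 (Set.Ioi 0)) = ⊤ :=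
  stmt8_general C D hC0 hlimsup
end

section
/- For ρ > 0 and r > 0, the Lebesgue volume in ℝ³ of ((ρB³) ⊕ (rB²)) \ (ρB³) equals π²ρ²r + 2πρr², where B³ is the closed unit ball of ℝ³, B² is a two-dimensional closed unit disk through the origin in ℝ³, and ⊕ is Minkowski addition. -/
open Pointwise MeasureTheory Real

open Metric Module Set

/-! Write points as `(u, t) ∈ L × ℝ`, where `t` is the signed distance to the plane `L`. The slice
of `ρB³` at height `t ∈ [-ρ, ρ]` is the disc `‖u‖ ≤ √(ρ² - t²)`; adding the horizontal disc `rB²`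
acts slice by slice, so the corresponding slice of the Minkowski sum is the disc
`‖u‖ ≤ √(ρ² - t²) + r`. The slices of the difference are therefore annuli of area
`π (2 r √(ρ² - t²) + r²)`, and Cavalieri's principle gives the volume
`2 π r · π ρ² / 2 + 2 ρ · π r²`. -/

theorem Submodule.exists_measurePreserving_linearEquiv_prod_real {E : Type*}
    [NormedAddCommGroup E] [InnerProductSpace ℝ E] [FiniteDimensional ℝ E]
    [MeasurableSpace E] [BorelSpace E] (K : Submodule ℝ E) (hK : finrank ℝ K + 1 = finrank ℝ E) :
    ∃ ψ : E ≃ₗ[ℝ] K × ℝ, MeasurePreserving ψ ∧ (∀ x, ‖x‖ ^ 2 = ‖(ψ x).1‖ ^ 2 + (ψ x).2 ^ 2) ∧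
      ∀ x, x ∈ K ↔ (ψ x).2 = 0 := by
  have h1 : finrank ℝ Kᗮ = 1 := by have := K.finrank_add_finrank_orthogonal; omega
  let f : Kᗮ ≃ₗᵢ[ℝ] ℝ :=
    (stdOrthonormalBasis ℝ Kᗮ).equiv (OrthonormalBasis.singleton (Fin 1) ℝ) (finCongr h1)
  let e := K.orthogonalDecomposition.trans (LinearIsometryEquiv.withLpProdCongr 2 (.refl ℝ K) f)
  refine ⟨e.toLinearEquiv.trans (WithLp.linearEquiv 2 ℝ (K × ℝ)),
    (WithLp.volume_preserving_ofLp K ℝ).comp e.measurePreserving, fun x ↦ ?_, fun x ↦ ?_⟩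
  · rw [← e.norm_map, WithLp.prod_norm_sq_eq_of_L2, Real.norm_eq_abs, sq_abs]
    rfl
  · have hsnd : (e.toLinearEquiv.trans (WithLp.linearEquiv 2 ℝ (K × ℝ)) x).2 =
        f (Kᗮ.orthogonalProjectionOnto x) := by
      simp [e]
    rw [hsnd, f.map_eq_zero_iff, Submodule.orthogonalProjectionOnto_eq_zero_iff,
      Submodule.orthogonal_orthogonal]

theorem sq_add_sq_le_sq_iff_le_sqrt {a b c : ℝ} (ha : 0 ≤ a) (hc : 0 ≤ c) :
    a ^ 2 + b ^ 2 ≤ c ^ 2 ↔ b ∈ Icc (-c) c ∧ a ≤ √(c ^ 2 - b ^ 2) := by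
  rw [mem_Icc, ← abs_le, ← sq_le_sq₀ (abs_nonneg b) hc, sq_abs]
  constructor
  · intro h
    have hb : b ^ 2 ≤ c ^ 2 := by nlinarith
    exact ⟨hb, (Real.le_sqrt ha (by linarith)).2 (by linarith)⟩
  · rintro ⟨hb, h⟩
    rw [Real.le_sqrt ha (by linarith)] at h
    linarith

theorem setOf_norm_le_add_closedBall_prod_zero {α F : Type*} [AddZeroClass α]
    [NormedAddCommGroup F] [NormedSpace ℝ F] [ProperSpace F] {s : Set α} {f : α → ℝ}
    (hf : ∀ a ∈ s, 0 ≤ f a) {r : ℝ} (hr : 0 ≤ r) :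
    {p : F × α | p.2 ∈ s ∧ ‖p.1‖ ≤ f p.2} + closedBall (0 : F) r ×ˢ {0} =
      {p | p.2 ∈ s ∧ ‖p.1‖ ≤ f p.2 + r} := by
  ext ⟨u, t⟩
  have key : ∀ t ∈ s, u ∈ closedBall (0 : F) (f t) + closedBall 0 r ↔ ‖u‖ ≤ f t + r := fun t ht ↦ by
    rw [closedBall_add_closedBall (hf t ht) hr, add_zero, mem_closedBall_zero_iff]
  simp only [mem_add, mem_prod, mem_singleton_iff, mem_ofPred_eq, Prod.exists, Prod.mk_add_mk,
    Prod.mk.injEq]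
  constructor
  · rintro ⟨u', t', ⟨ht', hu'⟩, v, _, ⟨hv, rfl⟩, rfl, rfl⟩
    rw [add_zero]
    exact ⟨ht', (key t' ht').1 ⟨u', mem_closedBall_zero_iff.2 hu', v, hv, rfl⟩⟩
  · rintro ⟨ht, hu⟩
    obtain ⟨u', hu', v, hv, rfl⟩ := (key t ht).2 hu
    exact ⟨u', t, ⟨ht, mem_closedBall_zero_iff.1 hu'⟩, v, 0, ⟨hv, rfl⟩, rfl, add_zero t⟩

section Transport

variable {E F : Type*} [NormedAddCommGroup E] [NormedSpace ℝ E] [NormedAddCommGroup F]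
  [NormedSpace ℝ F] {ψ : E ≃ₗ[ℝ] F × ℝ} {ρ : ℝ}

theorem closedBall_eq_preimage_setOf_norm_le_sqrt
    (hψ : ∀ x, ‖x‖ ^ 2 = ‖(ψ x).1‖ ^ 2 + (ψ x).2 ^ 2) (hρ : 0 ≤ ρ) :
    closedBall (0 : E) ρ = ψ ⁻¹' {p | p.2 ∈ Icc (-ρ) ρ ∧ ‖p.1‖ ≤ √(ρ ^ 2 - p.2 ^ 2)} := by
  ext x
  rw [mem_closedBall_zero_iff, ← sq_le_sq₀ (norm_nonneg x) hρ, hψ,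
    sq_add_sq_le_sq_iff_le_sqrt (norm_nonneg _) hρ]
  rfl

theorem closedBall_add_closedBall_inter_eq_preimage [ProperSpace F]
    (hψ : ∀ x, ‖x‖ ^ 2 = ‖(ψ x).1‖ ^ 2 + (ψ x).2 ^ 2) {K : Set E}
    (hK : ∀ x, x ∈ K ↔ (ψ x).2 = 0) (hρ : 0 ≤ ρ) {r : ℝ} (hr : 0 ≤ r) :
    closedBall (0 : E) ρ + (closedBall 0 r ∩ K) =
      ψ ⁻¹' {p | p.2 ∈ Icc (-ρ) ρ ∧ ‖p.1‖ ≤ √(ρ ^ 2 - p.2 ^ 2) + r} := by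
  have hdisc : closedBall (0 : E) r ∩ K = ψ ⁻¹' (closedBall 0 r ×ˢ {0}) := by
    ext x
    simp only [mem_inter_iff, mem_closedBall_zero_iff, hK, mem_preimage, mem_prod,
      mem_singleton_iff, and_congr_left_iff]
    intro h0
    rw [← sq_le_sq₀ (norm_nonneg _) hr, ← sq_le_sq₀ (norm_nonneg _) hr, hψ, h0]
    ring_nf
  rw [closedBall_eq_preimage_setOf_norm_le_sqrt hψ hρ, hdisc, ← ψ.image_symm_eq_preimage,
    ← ψ.image_symm_eq_preimage, ← image_add,
    setOf_norm_le_add_closedBall_prod_zero (f := fun t ↦ √(ρ ^ 2 - t ^ 2))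
      (fun _ _ ↦ sqrt_nonneg _) hr, ψ.image_symm_eq_preimage]

end Transport

theorem isClosed_setOf_mem_Icc_and_norm_le {F : Type*} [SeminormedAddCommGroup F] {a : ℝ}
    {g : ℝ → ℝ} (hg : Continuous g) :
    IsClosed {p : F × ℝ | p.2 ∈ Icc (-a) a ∧ ‖p.1‖ ≤ g p.2} :=
  (isClosed_Icc.preimage continuous_snd).inter
    (isClosed_le (continuous_norm.comp continuous_fst) (hg.comp continuous_snd))

section Volume

variable {F : Type*} [NormedAddCommGroup F] [InnerProductSpace ℝ F] [FiniteDimensional ℝ F]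
  [MeasurableSpace F] [BorelSpace F]

theorem volume_closedBall_diff_closedBall_of_finrank_eq_two (hF : finrank ℝ F = 2) (x : F)
    {R R' : ℝ} (hR' : 0 ≤ R') (h : R' ≤ R) :
    volume (closedBall x R \ closedBall x R') = ENNReal.ofReal (π * (R ^ 2 - R' ^ 2)) := by
  have : Nontrivial F := nontrivial_of_finrank_pos (R := ℝ) (by omega)
  have hvol : ∀ R, 0 ≤ R → volume (closedBall x R) = ENNReal.ofReal (π * R ^ 2) := fun R hR ↦ by
    rw [InnerProductSpace.volume_closedBall_of_dim_even (k := 1) hF, hF, ← ENNReal.ofReal_pow hR,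
      ← ENNReal.ofReal_mul (by positivity)]
    norm_num [mul_comm]
  rw [measure_sdiff (closedBall_subset_closedBall h) measurableSet_closedBall.nullMeasurableSet
    measure_closedBall_lt_top.ne, hvol R (hR'.trans h), hvol R' hR',
    ← ENNReal.ofReal_sub _ (by positivity), mul_sub]

theorem volume_setOf_norm_le_diff_setOf_norm_le (hF : finrank ℝ F = 2) {a : ℝ} (ha : 0 ≤ a)
    {f g : ℝ → ℝ} (hf : Continuous f) (hg : Continuous g) (hf0 : ∀ t, 0 ≤ f t)
    (hfg : ∀ t, f t ≤ g t) :
    volume ({p : F × ℝ | p.2 ∈ Icc (-a) a ∧ ‖p.1‖ ≤ g p.2} \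
        {p | p.2 ∈ Icc (-a) a ∧ ‖p.1‖ ≤ f p.2}) =
      ENNReal.ofReal (∫ t in (-a)..a, π * (g t ^ 2 - f t ^ 2)) := by
  have hslice : ∀ t, volume ((fun u ↦ (u, t)) ⁻¹'
      ({p : F × ℝ | p.2 ∈ Icc (-a) a ∧ ‖p.1‖ ≤ g p.2} \ {p | p.2 ∈ Icc (-a) a ∧ ‖p.1‖ ≤ f p.2})) =
      (Icc (-a) a).indicator (fun t ↦ ENNReal.ofReal (π * (g t ^ 2 - f t ^ 2))) t := by
    intro t
    by_cases ht : t ∈ Icc (-a) a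
    · rw [indicator_of_mem ht,
        ← volume_closedBall_diff_closedBall_of_finrank_eq_two hF 0 (hf0 t) (hfg t)]
      congr 1
      ext u
      simp only [mem_preimage, mem_sdiff, mem_ofPred_eq, ht, true_and, mem_closedBall_zero_iff]
    · rw [indicator_of_notMem ht]
      exact measure_mono_null (fun u hu ↦ absurd hu.1.1 ht) measure_empty
  have hnonneg : ∀ t, 0 ≤ π * (g t ^ 2 - f t ^ 2) := fun t ↦
    mul_nonneg pi_nonneg (sub_nonneg.2 (pow_le_pow_left₀ (hf0 t) (hfg t) 2))
  rw [Measure.volume_eq_prod, Measure.prod_apply_symm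
    ((isClosed_setOf_mem_Icc_and_norm_le hg).measurableSet.diff
      (isClosed_setOf_mem_Icc_and_norm_le hf).measurableSet)]
  simp_rw [hslice]
  rw [lintegral_indicator measurableSet_Icc, ← ofReal_integral_eq_lintegral_ofReal
    ((by fun_prop : Continuous fun t ↦ π * (g t ^ 2 - f t ^ 2)).integrableOn_Icc)
    (Filter.Eventually.of_forall hnonneg), intervalIntegral.integral_of_le (by linarith),
    integral_Icc_eq_integral_Ioc]

end Volume

theorem integral_sqrt_sq_sub_sq {ρ : ℝ} (hρ : 0 ≤ ρ) :
    ∫ t in (-ρ)..ρ, √(ρ ^ 2 - t ^ 2) = π * ρ ^ 2 / 2 := by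
  have hscale : ∀ x : ℝ, √(ρ ^ 2 - (ρ * x) ^ 2) = ρ * √(1 - x ^ 2) := fun x ↦ by
    rw [show ρ ^ 2 - (ρ * x) ^ 2 = ρ ^ 2 * (1 - x ^ 2) by ring, sqrt_mul (by positivity),
      sqrt_sq hρ]
  have := intervalIntegral.smul_integral_comp_mul_left (fun t ↦ √(ρ ^ 2 - t ^ 2)) ρ
    (a := -1) (b := 1)
  rw [mul_neg_one, mul_one] at this
  rw [← this]
  simp only [hscale, intervalIntegral.integral_const_mul, integral_sqrt_one_sub_sq, smul_eq_mul]
  ring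

theorem integral_pi_mul_sq_sqrt_add_sub_sq_sqrt {ρ : ℝ} (hρ : 0 ≤ ρ) (r : ℝ) :
    ∫ t in (-ρ)..ρ, π * ((√(ρ ^ 2 - t ^ 2) + r) ^ 2 - √(ρ ^ 2 - t ^ 2) ^ 2) =
      π ^ 2 * ρ ^ 2 * r + 2 * π * ρ * r ^ 2 := by
  have hexpand : ∀ t : ℝ, π * ((√(ρ ^ 2 - t ^ 2) + r) ^ 2 - √(ρ ^ 2 - t ^ 2) ^ 2) =
      2 * π * r * √(ρ ^ 2 - t ^ 2) + π * r ^ 2 := fun t ↦ by ring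
  simp only [hexpand]
  have hc : Continuous fun t : ℝ ↦ 2 * π * r * √(ρ ^ 2 - t ^ 2) := by fun_prop
  rw [intervalIntegral.integral_add (hc.intervalIntegrable _ _) intervalIntegrable_const,
    intervalIntegral.integral_const_mul, integral_sqrt_sq_sub_sq hρ,
    intervalIntegral.integral_const, smul_eq_mul]
  ring

theorem stmt14 (L : Submodule ℝ (EuclideanSpace ℝ (Fin 3)))
    (hL : Module.finrank ℝ L = 2) (ρ r : ℝ) (hρ : 0 < ρ) (hr : 0 < r) :
    volume
        ((ρ • Metric.closedBall (0 : EuclideanSpace ℝ (Fin 3)) 1 +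
            r • (Metric.closedBall (0 : EuclideanSpace ℝ (Fin 3)) 1 ∩ (L : Set _))) \
          ρ • Metric.closedBall (0 : EuclideanSpace ℝ (Fin 3)) 1) =
      ENNReal.ofReal (π ^ 2 * ρ ^ 2 * r + 2 * π * ρ * r ^ 2) := by
  obtain ⟨ψ, hψ, hnorm, hmem⟩ :=
    L.exists_measurePreserving_linearEquiv_prod_real (by rw [hL, finrank_euclideanSpace_fin])
  have hf : Continuous fun t : ℝ ↦ √(ρ ^ 2 - t ^ 2) := by fun_prop
  have hg : Continuous fun t : ℝ ↦ √(ρ ^ 2 - t ^ 2) + r := by fun_prop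
  have hL_smul : r • (L : Set (EuclideanSpace ℝ (Fin 3))) = L := by
    ext x
    rw [mem_smul_set_iff_inv_smul_mem₀ hr.ne']
    exact L.smul_mem_iff (inv_ne_zero hr.ne')
  rw [smul_set_inter₀ hr.ne', hL_smul, smul_unitClosedBall, smul_unitClosedBall,
    norm_of_nonneg hρ.le, norm_of_nonneg hr.le,
    closedBall_add_closedBall_inter_eq_preimage hnorm hmem hρ.le hr.le,
    closedBall_eq_preimage_setOf_norm_le_sqrt hnorm hρ.le, ← preimage_sdiff,
    hψ.measure_preimage ((isClosed_setOf_mem_Icc_and_norm_le hg).measurableSet.diff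
      (isClosed_setOf_mem_Icc_and_norm_le hf).measurableSet).nullMeasurableSet,
    volume_setOf_norm_le_diff_setOf_norm_le hL hρ.le hf hg (fun _ ↦ sqrt_nonneg _)
      (fun _ ↦ le_add_of_nonneg_right hr.le),
    integral_pi_mul_sq_sqrt_add_sub_sq_sqrt hρ.le]
end

section
/- Let A ⊂ ℝⁿ be measurable and Q ⊂ ℝⁿ nonempty compact convex of dimension n. Then λₙ((\underline{A} ⊕ int Q) \ A) ≤ λₙ({x ∈ Aᶜ : λₙ(A ∩ (x − Q)) > 0}) ≤ λₙ((\underline{A} ⊕ Q) \ A), where \underline{A} = (A⁰)ᶜ is the set of points at which A does not have Lebesgue density zero. -/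
/-!
A point `a` of `(densityZero A)ᶜ` sees `A` with positive measure in every neighbourhood, so if
`x = a + q` with `q ∈ interior Q`, the open neighbourhood `{x} - interior Q` of `a` forces
`0 < volume (A ∩ ({x} - Q))`. Conversely, by the Lebesgue density theorem almost every point of `A`
has density `1`, so `A ∩ densityZero A` is null; hence a set `A ∩ ({x} - Q)` of positive measure
contains some `a = x - q ∉ densityZero A`, and `x = a + q`.
-/

open Pointwise MeasureTheory

/-- The set of points where `A` has Lebesgue density zero. -/
def densityZero {n : ℕ} (A : Set (EuclideanSpace ℝ (Fin n))) :
    Set (EuclideanSpace ℝ (Fin n)) :=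
  {x | Filter.Tendsto
        (fun r : ℝ => volume (A ∩ Metric.closedBall x r) / volume (Metric.closedBall x r))
        (nhdsWithin 0 (Set.Ioi 0)) (nhds 0)}

open Filter Metric Set Topology

section

variable {n : ℕ}

theorem mem_densityZero_of_measure_inter_eq_zero {A U : Set (EuclideanSpace ℝ (Fin n))}
    (hU : IsOpen U) {a : EuclideanSpace ℝ (Fin n)} (ha : a ∈ U) (hAU : volume (A ∩ U) = 0) :
    a ∈ densityZero A := by
  obtain ⟨r, hr, hrU⟩ := nhds_basis_closedBall.mem_iff.1 (hU.mem_nhds ha)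
  have hnull : ∀ s ≤ r, volume (A ∩ closedBall a s) = 0 := fun s hs =>
    measure_mono_null (inter_subset_inter_right _ ((closedBall_subset_closedBall hs).trans hrU)) hAU
  refine tendsto_const_nhds.congr' ?_
  filter_upwards [Ioc_mem_nhdsGT hr] with s hs
  simp [hnull s hs.2]

theorem measure_inter_densityZero_eq_zero (A : Set (EuclideanSpace ℝ (Fin n))) :
    volume (A ∩ densityZero A) = 0 := by
  have hdensity_one := ae_iff.1 (Besicovitch.ae_tendsto_measure_inter_div volume A)
  refine measure_mono_null (fun x hx => ?_)
    (nonpos_iff_eq_zero.1 ((Measure.le_restrict_apply A _).trans_eq hdensity_one))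
  exact ⟨fun h => zero_ne_one (tendsto_nhds_unique hx.2 h), hx.1⟩

theorem add_interior_diff_subset_setOf_measure_inter_pos (A Q : Set (EuclideanSpace ℝ (Fin n))) :
    ((densityZero A)ᶜ + interior Q) \ A ⊆ {x | x ∈ Aᶜ ∧ 0 < volume (A ∩ ({x} - Q))} := by
  rintro _ ⟨⟨a, ha, q, hq, rfl⟩, hxA⟩
  refine ⟨hxA, pos_iff_ne_zero.2 fun hnull => ha ?_⟩
  have ha_mem : a ∈ ({a + q} : Set _) - interior Q :=
    ⟨a + q, mem_singleton _, q, hq, add_sub_cancel_right a q⟩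
  refine mem_densityZero_of_measure_inter_eq_zero isOpen_interior.sub_left ha_mem ?_
  exact measure_mono_null (inter_subset_inter_right _ (sub_subset_sub_left interior_subset)) hnull

theorem setOf_measure_inter_pos_subset_add_diff (A Q : Set (EuclideanSpace ℝ (Fin n))) :
    {x | x ∈ Aᶜ ∧ 0 < volume (A ∩ ({x} - Q))} ⊆ ((densityZero A)ᶜ + Q) \ A := by
  rintro x ⟨hxA, hpos⟩
  have hdiff : volume ((A ∩ ({x} - Q)) \ densityZero A) ≠ 0 := by
    rw [measure_sdiff_null' (measure_mono_null (inter_subset_inter_left _ inter_subset_left)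
      (measure_inter_densityZero_eq_zero A))]
    exact hpos.ne'
  obtain ⟨_, ⟨-, haQ⟩, ha⟩ := nonempty_of_measure_ne_zero hdiff
  obtain ⟨q, hq, rfl⟩ := singleton_sub.subset haQ
  exact ⟨⟨x - q, ha, q, hq, sub_add_cancel x q⟩, hxA⟩

end

theorem stmt16_general {n : ℕ} (A Q : Set (EuclideanSpace ℝ (Fin n))) :
    volume (((densityZero A)ᶜ + interior Q) \ A) ≤
        volume {x | x ∈ Aᶜ ∧ 0 < volume (A ∩ ({x} - Q))} ∧
      volume {x | x ∈ Aᶜ ∧ 0 < volume (A ∩ ({x} - Q))} ≤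
        volume (((densityZero A)ᶜ + Q) \ A) :=
  ⟨measure_mono (add_interior_diff_subset_setOf_measure_inter_pos A Q),
    measure_mono (setOf_measure_inter_pos_subset_add_diff A Q)⟩

theorem stmt16 {n : ℕ} (A Q : Set (EuclideanSpace ℝ (Fin n)))
    (hA : MeasurableSet A) (hQ : IsCompact Q) (hQconv : Convex ℝ Q)
    (hQfull : (interior Q).Nonempty) :
    volume (((densityZero A)ᶜ + interior Q) \ A) ≤
        volume {x | x ∈ Aᶜ ∧ 0 < volume (A ∩ ({x} - Q))} ∧
      volume {x | x ∈ Aᶜ ∧ 0 < volume (A ∩ ({x} - Q))} ≤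
        volume (((densityZero A)ᶜ + Q) \ A) :=
  stmt16_general A Q
end
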